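/- Let f : ℂ → ℂ be entire and not of the form z ↦ z + c, and suppose f has at least one periodic cycle. Define M_f = inf over cycles P of f of (max_{p ∈ P} |p|) + 1. Let U ⊆ ℂ be open and k ≥ 1 with f^k(U) ⊆ B(w, δ) for some w ∈ ℂ and δ ≤ 1/2, and suppose the closed disc of radius M_f about 0 is contained in U and no point of U lies in the basin of an attracting cycle of f. Then this leads to a contradiction; i.e., U cannot contain the closed disc B̄(0, M_f). -/

import Mathlib

open Filter

/-- `M_f`: infimum over cycles `P` of `f` of `max_{p ∈ P} |p| + 1`. -/
noncomputable def Mf (f : ℂ → ℂ) : ℝ :=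
  sInf {r : ℝ | ∃ (z : ℂ) (k : ℕ), 1 ≤ k ∧ f^[k] z = z ∧
    r = sSup ((fun j => ‖f^[j] z‖) '' Set.Iio k) + 1}

/-- `z` lies in the basin of an attracting cycle of `f`. -/
def InAttractingBasin (f : ℂ → ℂ) (z : ℂ) : Prop :=
  ∃ (w : ℂ) (k : ℕ), 1 ≤ k ∧ f^[k] w = w ∧ ‖deriv (f^[k]) w‖ < 1 ∧
    Tendsto (fun j => (f^[k])^[j] z) atTop (nhds w)

/-!
Choose a cycle `P` whose orbit stays in the disc of radius `M_f - 3/4`. Around every point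
of `P` the disc of radius `3/4` lies in `B̄(0, M_f) ⊆ U`, which `f^k` maps into a disc of
radius `δ ≤ 1/2`, so the Cauchy estimate gives `|(f^k)'| ≤ δ / (3/4) ≤ 2/3` along `P`.
By the chain rule the multiplier of `P`, viewed as a cycle of `f^k`, has modulus `< 1`:
`P` is an attracting cycle meeting `U`.
-/

open Function Metric Set

theorem Function.IsPeriodicPt.norm_iterate_le_sSup {α : Type*} [Norm α] {f : α → α} {n : ℕ}
    {x : α} (hx : IsPeriodicPt f n x) (hn : 0 < n) (m : ℕ) :
    ‖f^[m] x‖ ≤ sSup ((fun j => ‖f^[j] x‖) '' Iio n) := by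
  rw [← hx.iterate_mod_apply m]
  exact le_csSup ((finite_Iio n).image _).bddAbove ⟨m % n, Nat.mod_lt m hn, rfl⟩

theorem exists_isPeriodicPt_norm_iterate_add_one_lt {f : ℂ → ℂ}
    (hcycle : ∃ (z : ℂ) (j : ℕ), 1 ≤ j ∧ f^[j] z = z) {ε : ℝ} (hε : 0 < ε) :
    ∃ (p : ℂ) (j : ℕ), 1 ≤ j ∧ IsPeriodicPt f j p ∧ ∀ m, ‖f^[m] p‖ + 1 < Mf f + ε := by
  obtain ⟨z, j, hj, hz⟩ := hcycle
  obtain ⟨r, ⟨p, n, hn, hp, rfl⟩, hr⟩ :=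
    exists_lt_of_csInf_lt (by exact ⟨_, z, j, hj, hz, rfl⟩) (lt_add_of_pos_right (Mf f) hε)
  have hp : IsPeriodicPt f n p := hp
  exact ⟨p, n, hn, hp, fun m => (add_le_add_left (hp.norm_iterate_le_sSup hn m) 1).trans_lt hr⟩

theorem Complex.norm_deriv_le_of_mapsTo_sphere {F : Type*} [NormedAddCommGroup F]
    [NormedSpace ℂ F] {g : ℂ → F} {q : ℂ} {r δ : ℝ} {w : F} (hr : 0 < r)
    (hg : DiffContOnCl ℂ g (ball q r)) (hmaps : MapsTo g (sphere q r) (closedBall w δ)) :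
    ‖deriv g q‖ ≤ δ / r := by
  have := Complex.norm_deriv_le_of_forall_mem_sphere_norm_le hr (hg.sub_const w)
    fun z hz => mem_closedBall_iff_norm.mp (hmaps hz)
  rwa [deriv_sub_const] at this

theorem exists_hasDerivAt_iterate_norm_le {𝕜 : Type*} [NontriviallyNormedField 𝕜]
    {g : 𝕜 → 𝕜} {p : 𝕜} {c : ℝ} (hg : ∀ m, DifferentiableAt 𝕜 g (g^[m] p))
    (hc : ∀ m, ‖deriv g (g^[m] p)‖ ≤ c) (n : ℕ) :
    ∃ d, HasDerivAt g^[n] d p ∧ ‖d‖ ≤ c ^ n := by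
  induction n with
  | zero => exact ⟨1, hasDerivAt_id p, by simp⟩
  | succ n ih =>
    obtain ⟨d, hd, hdc⟩ := ih
    refine ⟨deriv g (g^[n] p) * d, iterate_succ' g n ▸ (hg n).hasDerivAt.comp p hd, ?_⟩
    rw [norm_mul, pow_succ']
    exact mul_le_mul (hc n) hdc (norm_nonneg d) ((norm_nonneg _).trans (hc 0))

theorem inAttractingBasin_of_isPeriodicPt {f : ℂ → ℂ} {n : ℕ} {p : ℂ} (hn : 1 ≤ n)
    (hp : IsPeriodicPt f n p) (hd : ‖deriv f^[n] p‖ < 1) : InAttractingBasin f p :=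
  ⟨p, n, hn, hp, hd, tendsto_const_nhds.congr fun j => (hp.isFixedPt.iterate j).symm⟩

theorem stmt_17_general (f : ℂ → ℂ) (U : Set ℂ) (k : ℕ) (w : ℂ) (δ : ℝ)
    (hf : Differentiable ℂ f)
    (hcycle : ∃ (z : ℂ) (j : ℕ), 1 ≤ j ∧ f^[j] z = z)
    (hk : 1 ≤ k)
    (hδ : δ ≤ 1 / 2)
    (himg : f^[k] '' U ⊆ Metric.ball w δ)
    (hball : Metric.closedBall (0 : ℂ) (Mf f) ⊆ U)
    (hbasin : ∀ z ∈ U, ¬ InAttractingBasin f z) :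
    False := by
  obtain ⟨p, j, hj, hp, horbit⟩ := exists_isPeriodicPt_norm_iterate_add_one_lt hcycle
    (by norm_num : (0 : ℝ) < 1 / 4)
  set g := f^[k]
  have hderiv (m : ℕ) : ‖deriv g (g^[m] p)‖ ≤ 2 / 3 := by
    have hq := iterate_mul f k m ▸ horbit (k * m)
    have hmaps : MapsTo g (sphere (g^[m] p) (3 / 4)) (closedBall w δ) := fun x hx =>
      ball_subset_closedBall <| himg ⟨x, hball <| mem_closedBall_zero_iff.mpr <| by
        linarith [norm_le_of_mem_closedBall (sphere_subset_closedBall hx)], rfl⟩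
    calc ‖deriv g (g^[m] p)‖ ≤ δ / (3 / 4) :=
          Complex.norm_deriv_le_of_mapsTo_sphere (by norm_num) (hf.iterate k).diffContOnCl hmaps
      _ ≤ 2 / 3 := by rw [div_le_iff₀ (by norm_num)]; linarith
  obtain ⟨d, hd, hdle⟩ :=
    exists_hasDerivAt_iterate_norm_le (fun m => (hf.iterate k).differentiableAt) hderiv j
  have hmultiplier : ‖deriv f^[k * j] p‖ < 1 := by
    rw [iterate_mul, hd.deriv]
    exact hdle.trans_lt (pow_lt_one₀ (by norm_num) (by norm_num) (by omega))
  refine hbasin p (hball ?_) (inAttractingBasin_of_isPeriodicPt (Nat.mul_le_mul hk hj)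
    (hp.const_mul k) hmultiplier)
  have hp0 := horbit 0
  rw [iterate_zero_apply] at hp0
  exact mem_closedBall_zero_iff.mpr (by linarith)

theorem stmt_17 (f : ℂ → ℂ) (U : Set ℂ) (k : ℕ) (w : ℂ) (δ : ℝ)
    (hf : Differentiable ℂ f)
    (hnotaffine : ¬ ∃ c : ℂ, f = fun z => z + c)
    (hcycle : ∃ (z : ℂ) (j : ℕ), 1 ≤ j ∧ f^[j] z = z)
    (hU : IsOpen U) (hk : 1 ≤ k)
    (hδ0 : 0 < δ) (hδ : δ ≤ 1 / 2)
    (himg : f^[k] '' U ⊆ Metric.ball w δ)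
    (hball : Metric.closedBall (0 : ℂ) (Mf f) ⊆ U)
    (hbasin : ∀ z ∈ U, ¬ InAttractingBasin f z) :
    False :=
  stmt_17_general f U k w δ hf hcycle hk hδ himg hball hbasin
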